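/- Let N be an even positive integer and θ ∈ (0, π/2). Set α = (1/N)·arccos(cos^N θ). Then the spectrum of the 2N×2N unitary matrix U_psw(θ) is exactly the set {exp(iα)·ω^l : l = 0, …, N−1} ∪ {exp(−iα)·ω^l : l = 0, …, N−1}. -/

import Mathlib

/-!
Eliminating the coin-1 components, an eigenvector of `Upsw N θ` for `μ` amounts to a nonzero
solution `x` of the cyclic recurrence `μ (μ + cos θ ωⁿ) x (n + 1) = (cos θ μ + ωⁿ) x n` on
`ZMod N`. A nonzero solution forces the two coefficient sequences to have the same product
around the cycle, and conversely when the coefficients do not vanish. For even `N` these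
products are `μᴺ (μᴺ - cosᴺθ)` and `cosᴺθ μᴺ - 1`, so `μ` is an eigenvalue iff `w = μᴺ` solves
`w² - 2 cos (N α) w + 1 = 0`, i.e. `μᴺ = e^{± i N α}`.
-/

open Complex

/-- `ω = exp(2πi/N)`. -/
noncomputable def omegaN (N : ℕ) : ℂ := Complex.exp (2 * Real.pi * Complex.I / N)

/-- The phase-space quantum walk operator `U_psw(θ)`, a `2N × 2N` matrix indexed by
(coin, walker) pairs, with block form `[[cosθ·T, sinθ·T],[sinθ·T̃, −cosθ·T̃]]`,
where `T` is the cyclic shift (`T|n⟩ = |n+1⟩`) and `T̃` the diagonal matrix with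
`T̃|n⟩ = ω^n|n⟩`. -/
noncomputable def Upsw (N : ℕ) (θ : ℝ) :
    Matrix (Fin 2 × ZMod N) (Fin 2 × ZMod N) ℂ := fun p q =>
  if p.1 = 0 then
    (if q.1 = 0 then (Real.cos θ : ℂ) else (Real.sin θ : ℂ)) *
      (if p.2 = q.2 + 1 then 1 else 0)
  else
    (if q.1 = 0 then (Real.sin θ : ℂ) else (-Real.cos θ : ℂ)) *
      (if p.2 = q.2 then omegaN N ^ (q.2.val) else 0)

open Finset Matrix

theorem Matrix.mem_spectrum_iff_exists_mulVec_eq_smul {n K : Type*} [Fintype n] [DecidableEq n]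
    [Field K] (A : Matrix n n K) (μ : K) :
    μ ∈ spectrum K A ↔ ∃ v ≠ 0, A *ᵥ v = μ • v := by
  simp only [← Matrix.spectrum_toLin', ← Module.End.hasEigenvalue_iff_mem_spectrum,
    Module.End.HasEigenvalue, Module.End.HasUnifEigenvalue, Submodule.ne_bot_iff,
    Module.End.mem_eigenspace_iff, Matrix.toLin'_apply]
  exact ⟨fun ⟨v, hv, h0⟩ => ⟨v, h0, hv⟩, fun ⟨v, h0, hv⟩ => ⟨v, hv, h0⟩⟩

theorem Complex.sq_sub_two_mul_cos_mul_add_one_eq_zero_iff (w x : ℂ) :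
    w ^ 2 - 2 * cos x * w + 1 = 0 ↔ w = exp (x * I) ∨ w = exp (-x * I) := by
  have hfactor : w ^ 2 - 2 * cos x * w + 1 = (w - exp (x * I)) * (w - exp (-x * I)) := by
    have hexp : exp (x * I) * exp (-x * I) = 1 := by rw [← exp_add]; simp
    rw [two_cos]
    linear_combination -hexp
  rw [hfactor, mul_eq_zero, sub_eq_zero, sub_eq_zero]

namespace ZMod

variable {N : ℕ} [NeZero N]

theorem prod_val_eq_prod_range {M : Type*} [CommMonoid M] (g : ℕ → M) :
    ∏ n : ZMod N, g n.val = ∏ k ∈ range N, g k := by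
  obtain ⟨k, rfl⟩ := Nat.exists_eq_succ_of_ne_zero (NeZero.ne N)
  exact Fin.prod_univ_eq_prod_range g _

theorem forall_of_imp_add_one {P : ZMod N → Prop} (h : ∀ n, P n → P (n + 1)) {m : ZMod N}
    (hm : P m) (n : ZMod N) : P n := by
  have hk : ∀ k : ℕ, P (m + k) := fun k => by
    induction k with
    | zero => simpa using hm
    | succ k ih => simpa [add_assoc] using h _ ih
  simpa using hk (n - m).val

theorem forall_of_imp_sub_one {P : ZMod N → Prop} (h : ∀ n, P (n + 1) → P n) {m : ZMod N}
    (hm : P m) (n : ZMod N) : P n := by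
  simpa using forall_of_imp_add_one (P := fun n => P (-n))
    (fun n hn => by rw [neg_add']; exact h (-n - 1) (by simpa using hn)) (m := -m)
    (by simpa using hm) (-n)

end ZMod

section CyclicRecurrence

variable {N : ℕ} [NeZero N]

theorem prod_eq_prod_of_cyclic_recurrence {R : Type*} [CommRing R] [IsDomain R]
    {a b f : ZMod N → R} (hf : f ≠ 0) (h : ∀ n, a n * f (n + 1) = b n * f n) :
    ∏ n, a n = ∏ n, b n := by
  have hshift : ∏ n, f (n + 1) = ∏ n, f n :=
    Fintype.prod_equiv (Equiv.addRight 1) _ _ fun _ => rfl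
  have hprod : (∏ n, a n) * ∏ n, f n = (∏ n, b n) * ∏ n, f n := by
    rw [← hshift, ← prod_mul_distrib, hshift, ← prod_mul_distrib]
    exact prod_congr rfl fun n _ => h n
  by_cases hf0 : ∏ n, f n = 0
  -- a zero of `f` would spread around the cycle if all `a n` (forwards) or all `b n` (backwards)
  -- were nonzero
  · obtain ⟨m, -, hm⟩ := prod_eq_zero_iff.1 hf0
    have ha : ∏ n, a n = 0 := by
      by_contra ha
      refine hf (funext (ZMod.forall_of_imp_add_one (fun n hn => ?_) hm))
      have han : a n ≠ 0 := fun h0 => ha (prod_eq_zero (mem_univ n) h0)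
      simpa [hn, han] using h n
    have hb : ∏ n, b n = 0 := by
      by_contra hb
      refine hf (funext (ZMod.forall_of_imp_sub_one (fun n hn => ?_) hm))
      have hbn : b n ≠ 0 := fun h0 => hb (prod_eq_zero (mem_univ n) h0)
      simpa [hn, hbn] using (h n).symm
    rw [ha, hb]
  · exact mul_right_cancel₀ hf0 hprod

theorem exists_ne_zero_cyclic_recurrence {K : Type*} [Field K] {a b : ZMod N → K}
    (ha : ∀ n, a n ≠ 0) (h : ∏ n, a n = ∏ n, b n) :
    ∃ f : ZMod N → K, f ≠ 0 ∧ ∀ n, a n * f (n + 1) = b n * f n := by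
  set F : ℕ → K := fun j => ∏ k ∈ range j, b k / a k
  have hF : F N = 1 := by
    simp only [F, prod_div_distrib, ← ZMod.prod_val_eq_prod_range (fun k => b k),
      ← ZMod.prod_val_eq_prod_range (fun k => a k), ZMod.natCast_zmod_val, ← h]
    exact div_self (prod_ne_zero_iff.2 fun n _ => ha n)
  refine ⟨fun n => F n.val, fun h0 => by simpa [F] using congrFun h0 0, fun n => ?_⟩
  have hstep : F (n.val + 1) = F n.val * (b n / a n) := by
    simp only [F, prod_range_succ, ZMod.natCast_zmod_val]
  have hcast : n + 1 = ((n.val + 1 : ℕ) : ZMod N) := by push_cast [ZMod.natCast_zmod_val]; rfl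
  simp only [hcast]
  obtain hlt | heq : n.val + 1 < N ∨ n.val + 1 = N := by have := ZMod.val_lt n; omega
  · rw [ZMod.val_cast_of_lt hlt, hstep]
    field_simp [ha n]
  · rw [heq, hF] at hstep
    rw [heq, ZMod.natCast_self, ZMod.val_zero, show F 0 = 1 from prod_range_zero _]
    field_simp [ha n] at hstep
    linear_combination hstep

end CyclicRecurrence

section Omega

variable {N : ℕ} [NeZero N]

theorem isPrimitiveRoot_omegaN : IsPrimitiveRoot (omegaN N) N := by
  simpa [omegaN] using Complex.isPrimitiveRoot_exp N (NeZero.ne N)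

theorem omegaN_pow_pow_eq_one (k : ℕ) : (omegaN N ^ k) ^ N = 1 := by
  rw [← pow_mul, mul_comm, pow_mul, isPrimitiveRoot_omegaN.pow_eq_one, one_pow]

theorem exists_lt_eq_mul_omegaN_pow_iff {a : ℂ} (ha : a ≠ 0) (z : ℂ) :
    (∃ l < N, z = a * omegaN N ^ l) ↔ z ^ N = a ^ N := by
  constructor
  · rintro ⟨l, -, rfl⟩
    rw [mul_pow, omegaN_pow_pow_eq_one, mul_one]
  · intro hz
    obtain ⟨l, hl, hzl⟩ := isPrimitiveRoot_omegaN.eq_pow_of_pow_eq_one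
      (show (z / a) ^ N = 1 by rw [div_pow, hz, div_self (pow_ne_zero N ha)])
    exact ⟨l, hl, by rw [hzl, mul_div_cancel₀ z ha]⟩

theorem prod_sub_mul_omegaN_pow (z a : ℂ) :
    ∏ k ∈ range N, (z - a * omegaN N ^ k) = z ^ N - a ^ N := by
  have h := congrArg (Polynomial.eval z) (X_pow_sub_C_eq_prod
    isPrimitiveRoot_omegaN (Nat.pos_of_ne_zero (NeZero.ne N)) (rfl : a ^ N = a ^ N))
  simp only [Polynomial.eval_sub, Polynomial.eval_pow, Polynomial.eval_X, Polynomial.eval_C,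
    Polynomial.eval_prod] at h
  rw [h]
  exact prod_congr rfl fun k _ => by ring

theorem prod_add_mul_omegaN_pow (hN : Even N) (z a : ℂ) :
    ∏ n : ZMod N, (z + a * omegaN N ^ n.val) = z ^ N - a ^ N := by
  rw [ZMod.prod_val_eq_prod_range (fun k => z + a * omegaN N ^ k)]
  calc ∏ k ∈ range N, (z + a * omegaN N ^ k)
      = ∏ k ∈ range N, ((-1) * (-z - a * omegaN N ^ k)) := prod_congr rfl fun k _ => by ring
    _ = z ^ N - a ^ N := by
      rw [prod_mul_distrib, prod_sub_mul_omegaN_pow, prod_const, card_range, hN.neg_one_pow,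
        hN.neg_pow, one_mul]

end Omega

section Upsw

variable {N : ℕ} [NeZero N] (θ : ℝ) (v : Fin 2 × ZMod N → ℂ)

theorem Upsw_mulVec_apply_zero_add_one (n : ZMod N) :
    (Upsw N θ *ᵥ v) (0, n + 1) = Real.cos θ * v (0, n) + Real.sin θ * v (1, n) := by
  simp [Matrix.mulVec, dotProduct, Fintype.sum_prod_type, Upsw]

theorem Upsw_mulVec_apply_one (n : ZMod N) :
    (Upsw N θ *ᵥ v) (1, n)
      = omegaN N ^ n.val * (Real.sin θ * v (0, n) - Real.cos θ * v (1, n)) := by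
  simp [Matrix.mulVec, dotProduct, Fintype.sum_prod_type, Upsw]
  ring

theorem Upsw_mulVec_eq_smul_iff (μ : ℂ) :
    Upsw N θ *ᵥ v = μ • v ↔ ∀ n : ZMod N,
      Real.cos θ * v (0, n) + Real.sin θ * v (1, n) = μ * v (0, n + 1) ∧
      omegaN N ^ n.val * (Real.sin θ * v (0, n) - Real.cos θ * v (1, n)) = μ * v (1, n) := by
  rw [funext_iff, Prod.forall, Fin.forall_fin_two,
    ← (Equiv.addRight (1 : ZMod N)).forall_congr_right, ← forall_and]
  simp [Upsw_mulVec_apply_zero_add_one, Upsw_mulVec_apply_one]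

end Upsw

section Spectrum

variable {N : ℕ} [NeZero N] {θ : ℝ} {μ : ℂ}

theorem cos_sq_add_sin_sq_ofReal (θ : ℝ) : (Real.cos θ : ℂ) ^ 2 + (Real.sin θ : ℂ) ^ 2 = 1 := by
  exact_mod_cast Real.cos_sq_add_sin_sq θ

theorem prod_eq_prod_of_mem_spectrum_Upsw (hs : Real.sin θ ≠ 0)
    (hμ : μ ∈ spectrum ℂ (Upsw N θ)) :
    ∏ n : ZMod N, μ * (μ + Real.cos θ * omegaN N ^ n.val)
      = ∏ n : ZMod N, (Real.cos θ * μ + omegaN N ^ n.val) := by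
  obtain ⟨v, hv0, hv⟩ := (Matrix.mem_spectrum_iff_exists_mulVec_eq_smul _ _).1 hμ
  rw [Upsw_mulVec_eq_smul_iff] at hv
  have hx : (fun n => v (0, n)) ≠ 0 := by
    intro h0
    have h0' : ∀ n, v (0, n) = 0 := congrFun h0
    refine hv0 (funext fun ⟨i, n⟩ => ?_)
    fin_cases i
    · exact h0' n
    · have h := (hv n).1
      rw [h0', h0', mul_zero, zero_add, mul_zero] at h
      exact (mul_eq_zero.1 h).resolve_left (Complex.ofReal_ne_zero.2 hs)
  refine prod_eq_prod_of_cyclic_recurrence hx fun n => ?_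
  linear_combination -(μ + Real.cos θ * omegaN N ^ n.val) * (hv n).1 - Real.sin θ * (hv n).2
    + omegaN N ^ n.val * v (0, n) * cos_sq_add_sin_sq_ofReal θ

theorem mem_spectrum_Upsw_of_prod_eq_prod
    (hne : ∀ n : ZMod N, μ * (μ + Real.cos θ * omegaN N ^ n.val) ≠ 0)
    (h : ∏ n : ZMod N, μ * (μ + Real.cos θ * omegaN N ^ n.val)
      = ∏ n : ZMod N, (Real.cos θ * μ + omegaN N ^ n.val)) :
    μ ∈ spectrum ℂ (Upsw N θ) := by
  obtain ⟨f, hf0, hf⟩ := exists_ne_zero_cyclic_recurrence hne h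
  set C : ℂ := (Real.cos θ : ℂ)
  set S : ℂ := (Real.sin θ : ℂ)
  set W : ZMod N → ℂ := fun n => omegaN N ^ n.val
  have hden : ∀ n, μ + C * W n ≠ 0 := fun n => right_ne_zero_of_mul (hne n)
  refine (Matrix.mem_spectrum_iff_exists_mulVec_eq_smul _ _).2
    ⟨fun p => ![f p.2, S * W p.2 * f p.2 / (μ + C * W p.2)] p.1,
      fun h0 => hf0 (funext fun n => by simpa using congrFun h0 (0, n)), ?_⟩
  rw [Upsw_mulVec_eq_smul_iff]
  intro n
  simp only [Matrix.cons_val_zero, Matrix.cons_val_one]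
  have hy : (μ + C * W n) * (S * W n * f n / (μ + C * W n)) = S * W n * f n :=
    mul_div_cancel₀ _ (hden n)
  constructor
  · refine mul_left_cancel₀ (hden n) ?_
    linear_combination S * hy - hf n + W n * f n * cos_sq_add_sin_sq_ofReal θ
  · linear_combination -hy

theorem mem_spectrum_Upsw_iff (hN : Even N) (hs : Real.sin θ ≠ 0) :
    μ ∈ spectrum ℂ (Upsw N θ) ↔ (μ ^ N) ^ 2 - 2 * (Real.cos θ : ℂ) ^ N * μ ^ N + 1 = 0 := by
  set C : ℂ := (Real.cos θ : ℂ)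
  have hprod : ∏ n : ZMod N, μ * (μ + C * omegaN N ^ n.val)
      - ∏ n : ZMod N, (C * μ + omegaN N ^ n.val) = (μ ^ N) ^ 2 - 2 * C ^ N * μ ^ N + 1 := by
    have hb := prod_add_mul_omegaN_pow hN (C * μ) 1
    simp only [one_mul, one_pow] at hb
    rw [prod_mul_distrib, prod_const, card_univ, ZMod.card, prod_add_mul_omegaN_pow hN, hb]
    ring
  refine ⟨fun hμ => by rw [← hprod, prod_eq_prod_of_mem_spectrum_Upsw hs hμ, sub_self],
    fun hμ => mem_spectrum_Upsw_of_prod_eq_prod (fun n => ?_) (sub_eq_zero.1 (hprod.trans hμ))⟩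
  have hC : (C ^ N) ^ 2 ≠ 1 := by
    have hc : Real.cos θ ^ 2 ≠ 1 := fun h =>
      hs (pow_eq_zero_iff two_ne_zero |>.1 (by linarith [Real.sin_sq_add_cos_sq θ]))
    rw [← pow_mul, mul_comm, pow_mul]
    simp only [C]
    exact_mod_cast (pow_eq_one_iff_of_nonneg (sq_nonneg _) (NeZero.ne N)).not.2 hc
  refine mul_ne_zero (by rintro rfl; simp [NeZero.ne N] at hμ) fun h => hC ?_
  have hμN : μ ^ N = C ^ N := by
    rw [eq_neg_of_add_eq_zero_left h, hN.neg_pow, mul_pow, omegaN_pow_pow_eq_one, mul_one]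
  rw [hμN] at hμ
  linear_combination -hμ

end Spectrum

/-- for even positive `N` and `θ ∈ (0, π/2)`, with
`α = (1/N)·arccos(cosᴺθ)`, the spectrum of `U_psw(θ)` is
`{exp(iα)·ωˡ : 0 ≤ l < N} ∪ {exp(−iα)·ωˡ : 0 ≤ l < N}`. -/
theorem psw_spectrum_even (N : ℕ) [NeZero N] (hN : Even N)
    (θ : ℝ) (hθ : θ ∈ Set.Ioo 0 (Real.pi / 2))
    (α : ℝ) (hα : α = Real.arccos (Real.cos θ ^ N) / N) :
    spectrum ℂ (Upsw N θ)
      = {z : ℂ | ∃ l : ℕ, l < N ∧ z = Complex.exp (Complex.I * α) * omegaN N ^ l}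
      ∪ {z : ℂ | ∃ l : ℕ, l < N ∧ z = Complex.exp (-(Complex.I * α)) * omegaN N ^ l} := by
  have hs : Real.sin θ ≠ 0 :=
    (Real.sin_pos_of_pos_of_lt_pi hθ.1 (by linarith [hθ.2, Real.pi_pos])).ne'
  have hcos : Real.cos (N * α) = Real.cos θ ^ N := by
    rw [hα, mul_div_cancel₀ _ (Nat.cast_ne_zero.2 (NeZero.ne N)), Real.cos_arccos
      (by linarith [hN.pow_nonneg (Real.cos θ)])
      (hN.pow_abs (Real.cos θ) ▸ pow_le_one₀ (abs_nonneg _) (Real.abs_cos_le_one θ))]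
  ext μ
  simp only [Set.mem_union, Set.mem_ofPred_eq,
    exists_lt_eq_mul_omegaN_pow_iff (Complex.exp_ne_zero _), ← Complex.exp_nat_mul]
  rw [mem_spectrum_Upsw_iff hN hs, ← Complex.ofReal_pow, ← hcos, Complex.ofReal_cos,
    Complex.sq_sub_two_mul_cos_mul_add_one_eq_zero_iff]
  push_cast
  ring_nf
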